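/- For every integer d ≥ 8 and all integers d₁, d₂ with 2 ≤ d₁ < d₂ and 2d₁d₂ = d(d₁+d₂), one has μ(d₁,d₂) < μ_reg(d); i.e., for integer average degree at least 8, the random d-regular graph has higher asymptotic algebraic connectivity than every random semi-regular bipartite graph with the same average degree. -/
import Mathlib


/-- The paper's asymptotic algebraic connectivity of a random `(d₁,d₂)` semi-regular
bipartite graph. -/
noncomputable def muRSRB (d₁ d₂ : ℝ) : ℝ :=
  (d₁ + d₂) / 2 -
    Real.sqrt (((d₂ - d₁) / 2) ^ 2 +
      Real.sqrt (d₁ + d₂ - 2 + Real.sqrt ((d₁ + d₂ - 2) ^ 2 - (d₂ - d₁) ^ 2)) ^ 2)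

/-- The asymptotic algebraic connectivity of a random `d`-regular graph. -/
noncomputable def muReg (d : ℝ) : ℝ := d - 2 * Real.sqrt (d - 1)

set_option maxHeartbeats 2000000 in
private lemma rsrb_key (x y : ℝ) (hx : 1 ≤ x) (hy : x < y)
    (hc : 3*x^2 + 3*y^2 + 7 ≤ x^2*y^2)
    (h2a : y^2 ≤ 2*x^4 + 3*x^2) :
    8*(y-x)^2*(x+y+1) < (4*x*y+4)*((x+y)^2-4*(x+y)-4) := by
  have hy1 : 1 ≤ y := hx.trans hy.le
  have hx0 : (0:ℝ) < x := lt_of_lt_of_le one_pos hx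
  have hy0 : (0:ℝ) < y := lt_of_lt_of_le one_pos hy1
  have hxy1 : 1 ≤ x*y := by nlinarith
  have hxy7 : 7 ≤ x*y := by nlinarith [sq_nonneg (x-y)]
  nlinarith [mul_nonneg (sub_nonneg.2 hc) (sub_nonneg.2 hx),
    mul_nonneg (sub_nonneg.2 hc) (sub_nonneg.2 hy.le),
    mul_nonneg (sub_nonneg.2 h2a) (sub_nonneg.2 hx),
    mul_nonneg (sub_nonneg.2 h2a) (sub_nonneg.2 hy.le),
    mul_nonneg (sub_nonneg.2 hxy7) (sq_nonneg (y-x)),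
    sq_nonneg (y-x), sq_nonneg (x*y-7)]

set_option maxHeartbeats 2000000 in
private lemma rsrb_real (A B Dr : ℝ) (hA : 2 ≤ A) (hAB : A + 1 ≤ B) (hD : 8 ≤ Dr)
    (h2d : Dr + 1 ≤ 2*A) (havg : 2*A*B = Dr*(A+B)) :
    muRSRB A B < muReg Dr := by
  set x := Real.sqrt (A - 1) with hxdef
  set y := Real.sqrt (B - 1) with hydef
  set t := Real.sqrt (Dr - 1) with htdef
  have hx2 : x^2 = A - 1 := Real.sq_sqrt (by linarith)
  have hy2 : y^2 = B - 1 := Real.sq_sqrt (by linarith)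
  have ht2 : t^2 = Dr - 1 := Real.sq_sqrt (by linarith)
  have hx0 : 0 ≤ x := Real.sqrt_nonneg _
  have hy0 : 0 ≤ y := Real.sqrt_nonneg _
  have ht0 : 0 ≤ t := Real.sqrt_nonneg _
  have hx1 : 1 ≤ x := by nlinarith [hx2]
  have hyx : x < y := by
    rw [hxdef, hydef]
    exact Real.sqrt_lt_sqrt (by linarith) (by linarith)
  have ht7 : 7 ≤ t^2 := by rw [ht2]; linarith
  have ht1 : 1 < t := by nlinarith
  have hcon : 2*(x^2+1)*(y^2+1) = (t^2+1)*(x^2+y^2+2) := by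
    rw [hx2, hy2, ht2]; linear_combination havg
  have h2aR : t^2 ≤ 2*x^2 := by rw [hx2, ht2]; linarith
  -- the two polynomial constraints
  have hc' : 3*x^2 + 3*y^2 + 7 ≤ x^2*y^2 := by
    nlinarith [mul_nonneg (by linarith : (0:ℝ) ≤ t^2 - 7) (by positivity : (0:ℝ) ≤ x^2+y^2+2)]
  have h2a' : y^2 ≤ 2*x^4 + 3*x^2 := by
    nlinarith [mul_nonneg (by linarith : (0:ℝ) ≤ 2*x^2 - t^2) (by positivity : (0:ℝ) ≤ x^2+y^2+2)]
  have key := rsrb_key x y hx1 hyx hc' h2a'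
  -- simplify the nested square roots
  have e1 : Real.sqrt ((A + B - 2)^2 - (B - A)^2) = 2*(x*y) := by
    have h : (A + B - 2)^2 - (B - A)^2 = (2*(x*y))^2 := by
      have : (2*(x*y))^2 = 4*x^2*y^2 := by ring
      rw [this, hx2, hy2]; ring
    rw [h, Real.sqrt_sq (by positivity)]
  have e2 : Real.sqrt (A + B - 2 + 2*(x*y)) = x + y := by
    have h : A + B - 2 + 2*(x*y) = (x+y)^2 := by
      have : (x+y)^2 = x^2 + y^2 + 2*(x*y) := by ring
      rw [this, hx2, hy2]; ring
    rw [h, Real.sqrt_sq (by positivity)]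
  set K := Real.sqrt ((y-x)^2 + 4) with hKdef
  have hK2 : K^2 = (y-x)^2 + 4 := Real.sq_sqrt (by positivity)
  have hK0 : 0 ≤ K := Real.sqrt_nonneg _
  have e3 : Real.sqrt (((B - A)/2)^2 + (x+y)^2) = (x+y)*K/2 := by
    have hBA : B - A = y^2 - x^2 := by rw [hx2, hy2]; ring
    have h : ((B - A)/2)^2 + (x+y)^2 = ((x+y)*K/2)^2 := by
      have h2 : ((x+y)*K/2)^2 = (x+y)^2*K^2/4 := by ring
      rw [hBA, h2, hK2]; ring
    rw [h, Real.sqrt_sq (by positivity)]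
  have hmu : muRSRB A B = (A+B)/2 - (x+y)*K/2 := by
    rw [muRSRB, e1, e2, e3]
  have hmuReg : muReg Dr = Dr - 2*t := by rw [muReg]
  rw [hmu, hmuReg]
  -- key quantities
  have hxy1 : 1 < x*y := by nlinarith
  -- K < x + y
  have hKu : K < x + y := by
    have h1 : K^2 < (x+y)^2 := by rw [hK2]; nlinarith [hxy1]
    exact lt_of_pow_lt_pow_left₀ 2 (by positivity) h1
  -- the star inequality : x + y + 2 - K < 2*t
  have hS0 : (0:ℝ) < (x+y)^2 + (y-x)^2 + 4 := by positivity
  have hN : 4*t^2*((x+y)^2+(y-x)^2+4) =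
      ((x+y)^2-(y-x)^2)^2 + 4*(x+y)^2 + 4*(y-x)^2 := by
    linear_combination (-8) * hcon
  set G := (((x+y)+2)^2 + (y-x)^2 + 4)*((x+y)^2+(y-x)^2+4) -
      (((x+y)^2-(y-x)^2)^2 + 4*(x+y)^2 + 4*(y-x)^2) with hGdef
  have hGpos : 0 < G := by
    have hform : G = 4*(((x+y)+2)*((x+y)^2+4) + (y-x)^2*((x+y)^2+(x+y)+2)) := by
      rw [hGdef]; ring
    have hp1 : 0 < ((x+y)+2)*((x+y)^2+4) :=
      mul_pos (by linarith only [hx0, hy0]) (by positivity)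
    have hp2 : 0 ≤ (y-x)^2*((x+y)^2+(x+y)+2) := by
      refine mul_nonneg (sq_nonneg _) ?_
      linarith only [sq_nonneg (x+y), hx0, hy0]
    rw [hform]; linarith only [hp1, hp2]
  have hDelta : 4*((x+y)+2)^2*((y-x)^2+4)*((x+y)^2+(y-x)^2+4)^2 - G^2 =
      4*(y-x)^2*(4*x*y-4)*((4*x*y+4)*((x+y)^2-4*(x+y)-4) - 8*(y-x)^2*(x+y+1)) := by
    rw [hGdef]; ring
  have hprod : 0 < 4*(y-x)^2*(4*x*y-4)*((4*x*y+4)*((x+y)^2-4*(x+y)-4) -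
      8*(y-x)^2*(x+y+1)) := by
    refine mul_pos (mul_pos ?_ (by linarith only [hxy1])) (by linarith only [key])
    have : 0 < y - x := by linarith only [hyx]
    positivity
  have hDpos : G^2 < 4*((x+y)+2)^2*((y-x)^2+4)*((x+y)^2+(y-x)^2+4)^2 := by
    linarith only [hDelta, hprod]
  have h2K : (0:ℝ) ≤ 2*((x+y)+2)*K*((x+y)^2+(y-x)^2+4) :=
    mul_nonneg (mul_nonneg (by linarith only [hx0, hy0]) hK0) hS0.le
  have hKval : 4*((x+y)+2)^2*((y-x)^2+4)*((x+y)^2+(y-x)^2+4)^2 =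
      (2*((x+y)+2)*K*((x+y)^2+(y-x)^2+4))^2 := by
    have h : (2*((x+y)+2)*K*((x+y)^2+(y-x)^2+4))^2 =
        4*((x+y)+2)^2*K^2*((x+y)^2+(y-x)^2+4)^2 := by ring
    rw [h, hK2]
  have hGlt : G < 2*((x+y)+2)*K*((x+y)^2+(y-x)^2+4) := by
    refine lt_of_pow_lt_pow_left₀ 2 h2K ?_
    rw [← hKval]; exact hDpos
  have h5 : ((2*t)^2 - ((x+y) + 2 - K)^2) * ((x+y)^2+(y-x)^2+4) =
      2*((x+y)+2)*K*((x+y)^2+(y-x)^2+4) - G := by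
    rw [hGdef]; linear_combination hN - ((x+y)^2+(y-x)^2+4) * hK2
  have hsq : ((x+y) + 2 - K)^2 < (2*t)^2 := by
    rcases lt_or_ge (((x+y) + 2 - K)^2) ((2*t)^2) with h | h
    · exact h
    · exfalso
      have hnn : ((2*t)^2 - ((x+y) + 2 - K)^2) * ((x+y)^2+(y-x)^2+4) ≤ 0 :=
        mul_nonpos_iff.mpr (Or.inr ⟨by linarith only [h], hS0.le⟩)
      linarith only [h5, hGlt, hnn]
  have h2t : 0 ≤ 2*t := by linarith only [ht0]
  have hstar : x + y + 2 - K < 2*t := lt_of_pow_lt_pow_left₀ 2 h2t hsq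
  -- conclude
  have huK : 0 < x + y - K := by linarith only [hKu]
  have h1 : x + y - K < 2*t - 2 := by linarith only [hstar]
  have hfin : (x + y - K)^2 < (2*t - 2)^2 := by
    have h2 := mul_self_lt_mul_self huK.le h1
    linarith only [h2]
  linarith only [hfin, hK2, hx2, hy2, ht2]

/-- For every integer `d ≥ 8` and all integers `2 ≤ d₁ < d₂` with `2d₁d₂ = d(d₁+d₂)`,
the random `d`-regular graph beats the `(d₁,d₂)` semi-regular bipartite graph:
`μ(d₁,d₂) < μ_reg(d)`. -/
theorem regular_beats_rsrb_high_degree (d : ℤ) (hd : 8 ≤ d) (d₁ d₂ : ℤ)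
    (hd₁ : 2 ≤ d₁) (hd₁₂ : d₁ < d₂) (havg : 2 * d₁ * d₂ = d * (d₁ + d₂)) :
    muRSRB (d₁ : ℝ) (d₂ : ℝ) < muReg (d : ℝ) := by
  have h1 : d₂ * (2*d₁ - d) = d * d₁ := by linear_combination havg
  have h2d : d + 1 ≤ 2 * d₁ := by nlinarith [h1]
  have hAB : d₁ + 1 ≤ d₂ := hd₁₂
  refine rsrb_real _ _ _ ?_ ?_ ?_ ?_ ?_
  · exact_mod_cast hd₁
  · exact_mod_cast hAB
  · exact_mod_cast hd
  · exact_mod_cast h2d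
  · exact_mod_cast havg
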